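/- In the exchange graph of a connected multigraph G, no vertex is isolated: for every pair (F, T) of a spanning 2-forest F and a spanning tree T with disjoint edge sets, there exists an edge e of T joining the two components of F, so that (F, T) is adjacent to (F + e, T - e) in the exchange graph. -/
import Mathlib


open Finset Matrix
open scoped Classical

variable {V E : Type*}

/-- Two vertices are joined by an edge of the edge set `S`. -/
def adjRel (src tgt : E → V) (S : Finset E) (u v : V) : Prop :=
  ∃ e ∈ S, (src e = u ∧ tgt e = v) ∨ (src e = v ∧ tgt e = u)

/-- Reachability using only edges in `S`. -/
def reach (src tgt : E → V) (S : Finset E) : V → V → Prop :=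
  Relation.EqvGen (adjRel src tgt S)

/-- Number of connected components of the spanning subgraph with edge set `S`. -/
noncomputable def nComp (src tgt : E → V) (S : Finset E) : ℕ :=
  Nat.card (Quotient (Relation.EqvGen.setoid (adjRel src tgt S)))

/-- A spanning tree: connected spanning subgraph with `|V| - 1` edges. -/
def IsSpanningTree (src tgt : E → V) [Fintype V] (S : Finset E) : Prop :=
  nComp src tgt S = 1 ∧ S.card + 1 = Fintype.card V

/-- A spanning 2-forest: spanning subgraph with exactly two connected
components and `|V| - 2` edges (hence acyclic). -/
def IsSpanning2Forest (src tgt : E → V) [Fintype V] (S : Finset E) : Prop :=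
  nComp src tgt S = 2 ∧ S.card + 2 = Fintype.card V

/-- The edges of `S` with both endpoints in `X` (edge set of the induced subgraph `S[X]`). -/
noncomputable def inducedEdges (src tgt : E → V) (S : Finset E) (X : Finset V) : Finset E :=
  S.filter fun e => src e ∈ X ∧ tgt e ∈ X

/-- The induced subgraph `S[X]` is a (spanning) tree on the vertex set `X`. -/
def IsTreeOn (src tgt : E → V) (X : Finset V) (S : Finset E) : Prop :=
  (inducedEdges src tgt S X).card + 1 = X.card ∧
    ∀ u ∈ X, ∀ v ∈ X, reach src tgt (inducedEdges src tgt S X) u v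

/-- `X` is saturated w.r.t. the (multi)graph with all edges `E`:
the induced subgraph has exactly `2|X| - 2` edges. -/
def Saturated (src tgt : E → V) [Fintype E] (X : Finset V) : Prop :=
  X.Nonempty ∧ (inducedEdges src tgt Finset.univ X).card + 2 = 2 * X.card

/-- A vertex of type `V₁` of the exchange graph: an edge-disjoint pair
(spanning 2-forest, spanning tree). -/
def Valid1 (src tgt : E → V) [Fintype V] (p : Finset E × Finset E) : Prop :=
  IsSpanning2Forest src tgt p.1 ∧ IsSpanningTree src tgt p.2 ∧ Disjoint p.1 p.2

/-- A vertex of type `V₂` of the exchange graph: an edge-disjoint pair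
(spanning tree, spanning 2-forest). -/
def Valid2 (src tgt : E → V) [Fintype V] (p : Finset E × Finset E) : Prop :=
  IsSpanningTree src tgt p.1 ∧ IsSpanning2Forest src tgt p.2 ∧ Disjoint p.1 p.2

/-- Vertices of the exchange graph: `V₁ ⊕ V₂`. -/
def ValidV (src tgt : E → V) [Fintype V] :
    (Finset E × Finset E) ⊕ (Finset E × Finset E) → Prop :=
  Sum.elim (Valid1 src tgt) (Valid2 src tgt)

/-- The basic (one-directional) adjacency: `(F, T)` is joined to `(T', F')`
when `T' = F + e` and `F' = T - e` for some edge `e` of `T` (pivoting at `e`). -/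
def baseAdj : (Finset E × Finset E) ⊕ (Finset E × Finset E) →
    (Finset E × Finset E) ⊕ (Finset E × Finset E) → Prop
  | Sum.inl p, Sum.inr q => ∃ e ∈ p.2, q.1 = insert e p.1 ∧ q.2 = p.2.erase e
  | _, _ => False

/-- A step along an edge of the exchange graph (between valid vertices). -/
def ExStep (src tgt : E → V) [Fintype V]
    (x y : (Finset E × Finset E) ⊕ (Finset E × Finset E)) : Prop :=
  ValidV src tgt x ∧ ValidV src tgt y ∧ (baseAdj x y ∨ baseAdj y x)

section Aux
variable (src tgt : E → V)

lemma reach_symm {S : Finset E} {u v : V} (h : reach src tgt S u v) : reach src tgt S v u :=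
  Relation.EqvGen.symm _ _ h

lemma reach_trans {S : Finset E} {u v w : V} (h : reach src tgt S u v)
    (h' : reach src tgt S v w) : reach src tgt S u w := Relation.EqvGen.trans _ _ _ h h'

lemma reach_mono {S S' : Finset E} (hss : S ⊆ S') {u v : V} (h : reach src tgt S u v) :
    reach src tgt S' u v := by
  induction h with
  | rel x y hxy => exact Relation.EqvGen.rel _ _ (by obtain ⟨e, he, h⟩ := hxy; exact ⟨e, hss he, h⟩)
  | refl x => exact Relation.EqvGen.refl x
  | symm x y _ ih => exact Relation.EqvGen.symm _ _ ih
  | trans x y z _ _ ih1 ih2 => exact Relation.EqvGen.trans _ _ _ ih1 ih2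

lemma reach_insert_self (e : E) (S : Finset E) :
    reach src tgt (insert e S) (src e) (tgt e) :=
  Relation.EqvGen.rel _ _ ⟨e, mem_insert_self e S, Or.inl ⟨rfl, rfl⟩⟩

lemma reach_insert_iff (e : E) (S : Finset E) (u v : V) :
    reach src tgt (insert e S) u v ↔ reach src tgt S u v ∨
      (reach src tgt S u (src e) ∧ reach src tgt S (tgt e) v) ∨
      (reach src tgt S u (tgt e) ∧ reach src tgt S (src e) v) := by
  constructor
  · intro h
    induction h with
    | rel x y hxy =>
      obtain ⟨f, hf, hor⟩ := hxy
      rcases Finset.mem_insert.mp hf with rfl | hfS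
      · rcases hor with ⟨h1, h2⟩ | ⟨h1, h2⟩
        · exact Or.inr (Or.inl ⟨h1 ▸ Relation.EqvGen.refl _, h2 ▸ Relation.EqvGen.refl _⟩)
        · exact Or.inr (Or.inr ⟨h2 ▸ Relation.EqvGen.refl _, h1 ▸ Relation.EqvGen.refl _⟩)
      · exact Or.inl (Relation.EqvGen.rel _ _ ⟨f, hfS, hor⟩)
    | refl x => exact Or.inl (Relation.EqvGen.refl x)
    | symm x y _ ih =>
      rcases ih with h | ⟨h1, h2⟩ | ⟨h1, h2⟩
      · exact Or.inl (reach_symm _ _ h)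
      · exact Or.inr (Or.inr ⟨reach_symm _ _ h2, reach_symm _ _ h1⟩)
      · exact Or.inr (Or.inl ⟨reach_symm _ _ h2, reach_symm _ _ h1⟩)
    | trans x y z _ _ ih1 ih2 =>
      rcases ih1 with h | ⟨h1, h2⟩ | ⟨h1, h2⟩ <;>
        rcases ih2 with h' | ⟨h1', h2'⟩ | ⟨h1', h2'⟩
      · exact Or.inl (reach_trans _ _ h h')
      · exact Or.inr (Or.inl ⟨reach_trans _ _ h h1', h2'⟩)
      · exact Or.inr (Or.inr ⟨reach_trans _ _ h h1', h2'⟩)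
      · exact Or.inr (Or.inl ⟨h1, reach_trans _ _ h2 h'⟩)
      · exact Or.inr (Or.inl ⟨h1, h2'⟩)
      · exact Or.inl (reach_trans _ _ h1 h2')
      · exact Or.inr (Or.inr ⟨h1, reach_trans _ _ h2 h'⟩)
      · exact Or.inl (reach_trans _ _ h1 h2')
      · exact Or.inr (Or.inr ⟨h1, h2'⟩)
  · intro h
    have hab := reach_insert_self src tgt e S
    have hm : ∀ {x y : V}, reach src tgt S x y → reach src tgt (insert e S) x y :=
      fun h => reach_mono src tgt (Finset.subset_insert e S) h
    rcases h with h | ⟨h1, h2⟩ | ⟨h1, h2⟩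
    · exact hm h
    · exact reach_trans _ _ (reach_trans _ _ (hm h1) hab) (hm h2)
    · exact reach_trans _ _ (reach_trans _ _ (hm h1) (reach_symm _ _ hab)) (hm h2)

lemma quot_eq_iff {S : Finset E} (u v : V) :
    (⟦u⟧ : Quotient (Relation.EqvGen.setoid (adjRel src tgt S))) = ⟦v⟧ ↔
      reach src tgt S u v := Quotient.eq

lemma card_le_nComp_insert [Finite V] (e : E) (S : Finset E) :
    nComp src tgt S ≤ nComp src tgt (insert e S) + 1 := by
  set QS := Quotient (Relation.EqvGen.setoid (adjRel src tgt S)) with hQS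
  set QI := Quotient (Relation.EqvGen.setoid (adjRel src tgt (insert e S))) with hQI
  let f : QS → QI := Quotient.map id (fun u v h => reach_mono src tgt (Finset.subset_insert e S) h)
  let g : QS → QI ⊕ Unit := fun x =>
    if x = (⟦tgt e⟧ : QS) ∧ (⟦src e⟧ : QS) ≠ (⟦tgt e⟧ : QS) then Sum.inr () else Sum.inl (f x)
  have hginj : Function.Injective g := by
    intro x y hxy
    simp only [g] at hxy
    by_cases h1 : x = (⟦tgt e⟧ : QS) ∧ (⟦src e⟧ : QS) ≠ (⟦tgt e⟧ : QS) <;>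
      by_cases h2 : y = (⟦tgt e⟧ : QS) ∧ (⟦src e⟧ : QS) ≠ (⟦tgt e⟧ : QS)
    · exact h1.1.trans h2.1.symm
    · rw [if_pos h1, if_neg h2] at hxy
      exact absurd hxy (by simp)
    · rw [if_neg h1, if_pos h2] at hxy
      exact absurd hxy (by simp)
    · rw [if_neg h1, if_neg h2] at hxy
      have hf : f x = f y := Sum.inl.inj hxy
      obtain ⟨u, rfl⟩ := Quotient.exists_rep x
      obtain ⟨v, rfl⟩ := Quotient.exists_rep y
      have hr : reach src tgt (insert e S) u v := by
        have h' := hf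
        simp only [f, Quotient.map_mk, id] at h'
        exact (quot_eq_iff src tgt u v).mp h'
      rw [reach_insert_iff] at hr
      rcases hr with h | ⟨ha1, ha2⟩ | ⟨ha1, ha2⟩
      · exact (quot_eq_iff src tgt u v).mpr h
      · have hv : (⟦v⟧ : QS) = ⟦tgt e⟧ := (quot_eq_iff src tgt v (tgt e)).mpr (reach_symm _ _ ha2)
        push_neg at h2
        have hab : reach src tgt S (src e) (tgt e) :=
          (quot_eq_iff src tgt (src e) (tgt e)).mp (h2 hv)
        exact (quot_eq_iff src tgt u v).mpr
          (reach_trans _ _ (reach_trans _ _ ha1 hab) ha2)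
      · have hu : (⟦u⟧ : QS) = ⟦tgt e⟧ := (quot_eq_iff src tgt u (tgt e)).mpr ha1
        push_neg at h1
        have hab : reach src tgt S (tgt e) (src e) :=
          (quot_eq_iff src tgt (tgt e) (src e)).mp (h1 hu).symm
        exact (quot_eq_iff src tgt u v).mpr
          (reach_trans _ _ (reach_trans _ _ ha1 hab) ha2)
  calc Nat.card QS ≤ Nat.card (QI ⊕ Unit) := Nat.card_le_card_of_injective g hginj
    _ = Nat.card QI + 1 := by rw [Nat.card_sum]; simp

lemma nComp_empty [Fintype V] : nComp src tgt (∅ : Finset E) = Fintype.card V := by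
  have hbij : Function.Bijective
      (Quotient.mk (Relation.EqvGen.setoid (adjRel src tgt (∅ : Finset E)))) := by
    constructor
    · intro u v huv
      have h : reach src tgt (∅ : Finset E) u v := (quot_eq_iff src tgt u v).mp huv
      clear huv
      induction h with
      | rel x y hxy => obtain ⟨e, he, _⟩ := hxy; exact absurd he (Finset.notMem_empty e)
      | refl x => rfl
      | symm x y _ ih => exact ih.symm
      | trans x y z _ _ ih1 ih2 => exact ih1.trans ih2
    · exact fun q => Quotient.exists_rep q
  rw [nComp, ← Nat.card_eq_fintype_card]
  exact (Nat.card_eq_of_bijective _ hbij).symm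

lemma card_le_nComp_add [Fintype V] (S : Finset E) :
    Fintype.card V ≤ nComp src tgt S + S.card := by
  induction S using Finset.induction with
  | empty => simp [nComp_empty]
  | @insert e S he ih =>
    calc Fintype.card V ≤ nComp src tgt S + S.card := ih
      _ ≤ nComp src tgt (insert e S) + 1 + S.card :=
          Nat.add_le_add_right (card_le_nComp_insert src tgt e S) _
      _ = nComp src tgt (insert e S) + (insert e S).card := by
          rw [Finset.card_insert_of_notMem he]; ring

end Aux

section Aux2
variable (src tgt : E → V)

lemma all_reach_of_nComp_one {S : Finset E} (h : nComp src tgt S = 1) (u v : V) :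
    reach src tgt S u v := by
  obtain ⟨hsub, -⟩ := Nat.card_eq_one_iff_unique.mp h
  exact (quot_eq_iff src tgt u v).mp (Subsingleton.elim _ _)

lemma two_classes {S : Finset E} (h : nComp src tgt S = 2) {a b : V}
    (hab : ¬ reach src tgt S a b) (u : V) :
    reach src tgt S u a ∨ reach src tgt S u b := by
  obtain ⟨x, y, hxy, huniv⟩ := Nat.card_eq_two_iff.mp h
  have hmem : ∀ z : Quotient (Relation.EqvGen.setoid (adjRel src tgt S)),
      z = x ∨ z = y := by
    intro z
    have : z ∈ ({x, y} : Set _) := huniv ▸ Set.mem_univ z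
    simpa using this
  have hab' : (⟦a⟧ : Quotient (Relation.EqvGen.setoid (adjRel src tgt S))) ≠ ⟦b⟧ :=
    fun hc => hab ((quot_eq_iff src tgt a b).mp hc)
  suffices h' : (⟦u⟧ : Quotient (Relation.EqvGen.setoid (adjRel src tgt S))) = ⟦a⟧ ∨
      (⟦u⟧ : Quotient (Relation.EqvGen.setoid (adjRel src tgt S))) = ⟦b⟧ by
    rcases h' with h' | h'
    · exact Or.inl ((quot_eq_iff src tgt u a).mp h')
    · exact Or.inr ((quot_eq_iff src tgt u b).mp h')
  rcases hmem ⟦u⟧ with hu | hu <;> rcases hmem ⟦a⟧ with ha | ha <;>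
    rcases hmem ⟦b⟧ with hb | hb <;> simp_all

lemma nComp_insert_one [Fintype V] {S : Finset E} (hV : Nonempty V)
    (h : nComp src tgt S = 2) {e : E} (hab : ¬ reach src tgt S (src e) (tgt e)) :
    nComp src tgt (insert e S) = 1 := by
  refine Nat.card_eq_one_iff_unique.mpr ⟨⟨fun x y => ?_⟩, ⟨⟦hV.some⟧⟩⟩
  obtain ⟨u, rfl⟩ := Quotient.exists_rep x
  obtain ⟨v, rfl⟩ := Quotient.exists_rep y
  refine (quot_eq_iff src tgt u v).mpr ?_
  rw [reach_insert_iff]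
  rcases two_classes src tgt h hab u with hu | hu <;>
    rcases two_classes src tgt h hab v with hv | hv
  · exact Or.inl (reach_trans _ _ hu (reach_symm _ _ hv))
  · exact Or.inr (Or.inl ⟨hu, reach_symm _ _ hv⟩)
  · exact Or.inr (Or.inr ⟨hu, reach_symm _ _ hv⟩)
  · exact Or.inl (reach_trans _ _ hu (reach_symm _ _ hv))

lemma nComp_erase_two [Fintype V] {T : Finset E} {e : E} (he : e ∈ T)
    (hT1 : nComp src tgt T = 1) (hTcard : T.card + 1 = Fintype.card V) :
    nComp src tgt (T.erase e) = 2 ∧ ¬ reach src tgt (T.erase e) (src e) (tgt e) := by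
  set S := T.erase e with hS
  have hins : insert e S = T := Finset.insert_erase he
  have hall : ∀ u v : V, reach src tgt T u v := all_reach_of_nComp_one src tgt hT1
  have hcardV : 2 ≤ Fintype.card V := by
    have : 1 ≤ T.card := Finset.card_pos.mpr ⟨e, he⟩
    omega
  have hScard : S.card + 2 = Fintype.card V := by
    have : S.card + 1 = T.card := Finset.card_erase_add_one he
    omega
  have hNV : Nonempty V := Fintype.card_pos_iff.mp (by omega)
  have hnr : ¬ reach src tgt S (src e) (tgt e) := by
    intro hr
    have hSall : ∀ u v : V, reach src tgt S u v := by
      intro u v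
      have h' := hall u v
      rw [← hins, reach_insert_iff] at h'
      rcases h' with h' | ⟨h1, h2⟩ | ⟨h1, h2⟩
      · exact h'
      · exact reach_trans _ _ (reach_trans _ _ h1 hr) h2
      · exact reach_trans _ _ (reach_trans _ _ h1 (reach_symm _ _ hr)) h2
    have hS1 : nComp src tgt S = 1 := by
      refine Nat.card_eq_one_iff_unique.mpr ⟨⟨fun x y => ?_⟩, ⟨⟦hNV.some⟧⟩⟩
      obtain ⟨u, rfl⟩ := Quotient.exists_rep x
      obtain ⟨v, rfl⟩ := Quotient.exists_rep y
      exact (quot_eq_iff src tgt u v).mpr (hSall u v)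
    have hle := card_le_nComp_add src tgt S
    omega
  refine ⟨?_, hnr⟩
  refine Nat.card_eq_two_iff.mpr ⟨⟦src e⟧, ⟦tgt e⟧,
    fun hc => hnr ((quot_eq_iff src tgt _ _).mp hc), ?_⟩
  refine Set.eq_univ_of_forall fun z => ?_
  obtain ⟨u, rfl⟩ := Quotient.exists_rep z
  have h' := hall u (src e)
  rw [← hins, reach_insert_iff] at h'
  rcases h' with h' | ⟨h1, h2⟩ | ⟨h1, h2⟩
  · exact Set.mem_insert_iff.mpr (Or.inl ((quot_eq_iff src tgt _ _).mpr h'))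
  · exact Set.mem_insert_iff.mpr (Or.inl ((quot_eq_iff src tgt _ _).mpr h1))
  · exact Set.mem_insert_iff.mpr (Or.inr ((quot_eq_iff src tgt _ _).mpr h1))

end Aux2

/-- No vertex of the exchange graph is isolated: for every
edge-disjoint pair `(F, T)` of a spanning 2-forest and spanning tree there is
an edge `e` of `T` joining the two components of `F`, and `(F, T)` is
adjacent to `(F + e, T - e)` in the exchange graph. -/
theorem stmt_6 [Fintype V] [Fintype E] (src tgt : E → V)
    (hconn : nComp src tgt (Finset.univ : Finset E) = 1)
    (F T : Finset E)
    (hF : IsSpanning2Forest src tgt F) (hT : IsSpanningTree src tgt T)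
    (hdisj : Disjoint F T) :
    ∃ e ∈ T, ¬ reach src tgt F (src e) (tgt e) ∧
      ExStep src tgt (Sum.inl (F, T)) (Sum.inr (insert e F, T.erase e)) := by

  classical
  -- find an edge of T joining the two components of F
  obtain ⟨hF1, hF2⟩ := hF
  obtain ⟨hT1, hT2⟩ := hT
  have hNV : Nonempty V := Fintype.card_pos_iff.mp (by omega)
  have hexists : ∃ e ∈ T, ¬ reach src tgt F (src e) (tgt e) := by
    by_contra hc
    push_neg at hc
    have hTF : ∀ u v : V, reach src tgt T u v → reach src tgt F u v := by
      intro u v h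
      induction h with
      | rel x y hxy =>
        obtain ⟨f, hf, hor⟩ := hxy
        rcases hor with ⟨h1, h2⟩ | ⟨h1, h2⟩
        · exact h1 ▸ h2 ▸ hc f hf
        · exact h1 ▸ h2 ▸ reach_symm _ _ (hc f hf)
      | refl x => exact Relation.EqvGen.refl x
      | symm x y _ ih => exact reach_symm _ _ ih
      | trans x y z _ _ ih1 ih2 => exact reach_trans _ _ ih1 ih2
    obtain ⟨x, y, hxy, -⟩ := Nat.card_eq_two_iff.mp hF1
    obtain ⟨u, rfl⟩ := Quotient.exists_rep x
    obtain ⟨v, rfl⟩ := Quotient.exists_rep y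
    exact hxy ((quot_eq_iff src tgt u v).mpr
      (hTF u v (all_reach_of_nComp_one src tgt hT1 u v)))
  obtain ⟨e, heT, hnrF⟩ := hexists
  have heF : e ∉ F := fun h => (Finset.disjoint_left.mp hdisj h) heT
  obtain ⟨hS2, -⟩ := nComp_erase_two src tgt heT hT1 hT2
  refine ⟨e, heT, hnrF, ?_, ?_, Or.inl ⟨e, heT, rfl, rfl⟩⟩
  · exact ⟨⟨hF1, hF2⟩, ⟨hT1, hT2⟩, hdisj⟩
  · refine ⟨⟨nComp_insert_one src tgt hNV hF1 hnrF, ?_⟩, ⟨hS2, ?_⟩, ?_⟩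
    · rw [Finset.card_insert_of_notMem heF]; omega
    · show (T.erase e).card + 2 = Fintype.card V
      have : (T.erase e).card + 1 = T.card := Finset.card_erase_add_one heT
      omega
    · rw [Finset.disjoint_left]
      intro x hx hx'
      rcases Finset.mem_insert.mp hx with rfl | hxF
      · exact Finset.notMem_erase x T hx'
      · exact Finset.disjoint_left.mp hdisj hxF (Finset.mem_of_mem_erase hx')
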